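/- (Boole's Inequality) Let S be a zerosumfree semiring with 1 + 1 complemented, T an ordered ring, and p : S → T a probability function. If s₁, ..., sₙ ∈ S are complemented, then p(s₁ + ⋯ + sₙ) ≤ p(s₁) + ⋯ + p(sₙ). -/

import Mathlib

/-!
Zerosumfreeness forces the complement `c` of `1 + 1` to vanish (from `(1 + 1) * c = c + c = 0`),
so `1 + 1 = 1` and addition in `S` is idempotent. Then every complemented `a` lies below `1`, the
complemented elements are closed under `+` (the complement of `a + b` is `a' * b'`), and for `a`
complemented and `b ≤ 1` (that is, `1 + b = 1`) the decompositions `a + b = a + a' * b` and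
`b = a * b + a' * b` into orthogonal summands give `p (a + b) = p a + p (a' * b) ≤ p a + p b`.
Boole's inequality is this subadditivity summed over the family.
-/

def IsComplementedElem {S : Type*} [Semiring S] (a : S) : Prop :=
  ∃ c, a * c = 0 ∧ a + c = 1

section IdempotentAddition

variable {S : Type*} [CommSemiring S]

theorem one_add_one_eq_one_of_isComplementedElem (hzs : ∀ a b : S, a + b = 0 → a = 0 ∧ b = 0)
    (h2 : IsComplementedElem (1 + 1 : S)) : (1 : S) + 1 = 1 := by
  obtain ⟨c, hc0, hc1⟩ := h2
  have hc : c = 0 := (hzs c c (by rwa [add_mul, one_mul] at hc0)).1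
  rwa [hc, add_zero] at hc1

theorem add_self_of_one_add_one (h11 : (1 : S) + 1 = 1) (a : S) : a + a = a := by
  rw [← one_mul a, ← add_mul, h11]

theorem IsComplementedElem.one_add (h11 : (1 : S) + 1 = 1) {a : S} (ha : IsComplementedElem a) :
    1 + a = 1 := by
  obtain ⟨a', -, ha1⟩ := ha
  calc 1 + a = (a + a) + a' := by rw [← ha1]; ring
    _ = 1 := by rw [add_self_of_one_add_one h11, ha1]

theorem IsComplementedElem.add (h11 : (1 : S) + 1 = 1) {a b : S} (ha : IsComplementedElem a)
    (hb : IsComplementedElem b) : IsComplementedElem (a + b) := by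
  obtain ⟨a', ha0, ha1⟩ := ha
  obtain ⟨b', hb0, hb1⟩ := hb
  refine ⟨a' * b', ?_, ?_⟩
  · calc (a + b) * (a' * b') = (a * a') * b' + (b * b') * a' := by ring
      _ = 0 := by rw [ha0, hb0, zero_mul, zero_mul, add_zero]
  · have ha' : 1 + a' = 1 := IsComplementedElem.one_add h11
      ⟨a, by rw [mul_comm, ha0], by rw [add_comm, ha1]⟩
    calc a + b + a' * b' = a + (1 + a') * b + a' * b' := by rw [ha', one_mul]
      _ = (a + a' * (b + b')) + b := by ring
      _ = 1 := by rw [hb1, mul_one, ha1, IsComplementedElem.one_add h11 ⟨b', hb0, hb1⟩]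

end IdempotentAddition

section Probability

variable {S T : Type*} [CommSemiring S] [AddCommMonoid T] [PartialOrder T] {p : S → T}

theorem map_zero_eq_zero_of_additive [IsOrderedCancelAddMonoid T]
    (hadd : ∀ a b : S, a * b = 0 → p (a + b) = p a + p b) : p 0 = 0 := by
  have h := hadd 0 0 (mul_zero 0)
  rw [add_zero] at h
  exact left_eq_add.mp h

theorem map_add_le_of_isComplementedElem [IsOrderedAddMonoid T] (hnonneg : ∀ s : S, 0 ≤ p s)
    (hadd : ∀ a b : S, a * b = 0 → p (a + b) = p a + p b) {a b : S} (ha : IsComplementedElem a)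
    (hb : 1 + b = 1) : p (a + b) ≤ p a + p b := by
  obtain ⟨a', ha0, ha1⟩ := ha
  have hab : p (a + b) = p a + p (a' * b) := by
    have hsplit : a + b = a + a' * b := by
      calc a + b = a * (1 + b) + a' * b := by
            rw [mul_add, mul_one, add_assoc, ← add_mul, ha1, one_mul]
        _ = a + a' * b := by rw [hb, mul_one]
    rw [hsplit, hadd a (a' * b) (by rw [← mul_assoc, ha0, zero_mul])]
  have hb' : p b = p (a * b) + p (a' * b) := by
    rw [← hadd (a * b) (a' * b) (by rw [mul_mul_mul_comm, ha0, zero_mul]), ← add_mul, ha1,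
      one_mul]
  rw [hab, hb']
  exact add_le_add_right (le_add_of_nonneg_left (hnonneg _)) _

end Probability

theorem boole_inequality_general
    {S T : Type*} [CommSemiring S] [CommRing T] [PartialOrder T] [IsOrderedRing T]
    (hzs : ∀ a b : S, a + b = 0 → a = 0 ∧ b = 0)
    (h2 : ∃ c : S, (1 + 1) * c = 0 ∧ (1 + 1) + c = 1)
    (p : S → T)
    (hnonneg : ∀ s : S, 0 ≤ p s)
    (hadd : ∀ a b : S, a * b = 0 → p (a + b) = p a + p b)
    (n : ℕ) (s : Fin n → S)
    (hc : ∀ i, ∃ c, s i * c = 0 ∧ s i + c = 1) :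
    p (∑ i, s i) ≤ ∑ i, p (s i) := by
  have h11 : (1 : S) + 1 = 1 := one_add_one_eq_one_of_isComplementedElem hzs h2
  exact Finset.le_sum_of_subadditive_on_pred p IsComplementedElem
    (map_zero_eq_zero_of_additive hadd).le
    (fun _ _ ha hb => map_add_le_of_isComplementedElem hnonneg hadd ha (hb.one_add h11))
    (fun _ _ ha hb => ha.add h11 hb) s (fun i _ => hc i)

/-- (Boole's Inequality) Let `S` be a zerosumfree commutative semiring with `1 + 1`
complemented, `T` an ordered commutative ring, and `p : S → T` a probability function.
If `s 0, …, s (n-1)` are complemented, then `p (∑ᵢ s i) ≤ ∑ᵢ p (s i)`. -/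
theorem boole_inequality
    {S T : Type*} [CommSemiring S] [CommRing T] [PartialOrder T] [IsOrderedRing T]
    (hzs : ∀ a b : S, a + b = 0 → a = 0 ∧ b = 0)
    (h2 : ∃ c : S, (1 + 1) * c = 0 ∧ (1 + 1) + c = 1)
    (p : S → T)
    (hnonneg : ∀ s : S, 0 ≤ p s)
    (hone : p 1 = 1)
    (hadd : ∀ a b : S, a * b = 0 → p (a + b) = p a + p b)
    (n : ℕ) (s : Fin n → S)
    (hc : ∀ i, ∃ c, s i * c = 0 ∧ s i + c = 1) :
    p (∑ i, s i) ≤ ∑ i, p (s i) :=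
  boole_inequality_general hzs h2 p hnonneg hadd n s hc
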